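/- arXiv:1906.00211 — 7 statements merged into one kernel-verified Lean document; each statement's English description precedes it below -/
import Mathlib

section
/- Let $L \geq 1$ and let $C \in \mathbb{C}^{L\times L}$ be a circulant matrix whose first row is $(1, e^{i\varphi_1}, \ldots, e^{i\varphi_{L-1}})$ for some angles $\varphi_1,\ldots,\varphi_{L-1} \in [0,2\pi)$ (i.e., $C[k_1,k_2] = e^{i\varphi_{(k_2-k_1) \bmod L}}$ with $\varphi_0 = 0$). If $C$ is Hermitian and positive semidefinite, then there exists $\ell \in \{0,\ldots,L-1\}$ such that $C = f_\ell f_\ell^*$, where $f_\ell[k] = e^{-2\pi i k\ell/L}$. -/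
/-!
If a positive semidefinite matrix `A` has `A i i = A j j = 1` and `‖A i j‖ = 1`, the
quadratic form vanishes at `x = δ_j - A i j • δ_i`, so `A x = 0`: column `j` of `A` is
`A i j` times column `i`. For the circulant `C k m = e (m - k)` with unimodular `e` and
`e 0 = 1`, row `0` of this identity reads `e (a + b) = e a * e b`. Hence `e` is an additive
character of `ℤ/L`, i.e. `e m = ζ ^ m` with `ζ ^ L = 1`, so `ζ = exp (2πiℓ/L)` for some `ℓ`,
and `C k m = e m * conj (e k) = f_ℓ k * conj (f_ℓ m)`.
-/

open Matrix
open scoped ComplexOrder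

/-- The (unnormalized) DFT vector `f_ℓ[k] = e^{-2πikℓ/L}`. -/
noncomputable def fDFT (L : ℕ) (ℓ k : Fin L) : ℂ :=
  Complex.exp (-(2 * (Real.pi : ℂ) * Complex.I * ((k : ℕ) : ℂ) * ((ℓ : ℕ) : ℂ)) / (L : ℂ))

theorem Matrix.PosSemidef.apply_eq_apply_mul_of_norm_eq_one {n 𝕜 : Type*} [Fintype n]
    [RCLike 𝕜] {A : Matrix n n 𝕜} (hA : A.PosSemidef) {i j : n}
    (hi : A i i = 1) (hj : A j j = 1) (hij : ‖A i j‖ = 1) (r : n) :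
    A r j = A r i * A i j := by
  classical
  have hji : A j i = star (A i j) := by rw [← hA.isHermitian.apply]
  have hnorm : starRingEnd 𝕜 (A i j) * A i j = 1 := by
    rw [RCLike.conj_mul, hij]; simp
  set x : n → 𝕜 := Pi.single j 1 - Pi.single i (A i j)
  have hx : star x ⬝ᵥ A *ᵥ x = 0 := by
    simp [x, sub_dotProduct, mulVec_sub, hi, hj, hji, hnorm]
  have hAx := congr_fun ((hA.dotProduct_mulVec_zero_iff x).mp hx) r
  simpa [x, mulVec_sub, sub_eq_zero, mul_comm] using hAx

theorem map_add_of_posSemidef_of_apply_eq_sub {G 𝕜 : Type*} [AddCommGroup G] [Fintype G]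
    [RCLike 𝕜] {C : Matrix G G 𝕜} (hC : C.PosSemidef) {e : G → 𝕜}
    (hCe : ∀ k m, C k m = e (m - k)) (he0 : e 0 = 1) (hnorm : ∀ g, ‖e g‖ = 1) (a b : G) :
    e (a + b) = e a * e b := by
  have hdiag (k : G) : C k k = 1 := by rw [hCe, sub_self, he0]
  have h := hC.apply_eq_apply_mul_of_norm_eq_one (hdiag a) (hdiag (a + b))
    (by rw [hCe]; exact hnorm _) 0
  simpa [hCe, add_sub_cancel_left] using h

open Fin.NatCast in
theorem Fin.nsmul_one_eq_ofNat {L : ℕ} [NeZero L] (n : ℕ) : n • (1 : Fin L) = Fin.ofNat L n :=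
  nsmul_one n

theorem star_fDFT (L : ℕ) (ℓ k : Fin L) :
    star (fDFT L ℓ k) = Complex.exp (2 * Real.pi * Complex.I / L) ^ ((ℓ : ℕ) * (k : ℕ)) := by
  rw [fDFT, Complex.star_def, ← Complex.exp_conj, ← Complex.exp_nat_mul]
  congr 1
  simp only [map_div₀, map_neg, map_mul, map_ofNat, Complex.conj_ofReal, Complex.conj_I, mul_neg,
    map_natCast, neg_mul, neg_neg, Nat.cast_mul]
  ring

theorem exists_eq_star_fDFT_of_map_add {L : ℕ} [NeZero L] {e : Fin L → ℂ} (he0 : e 0 = 1)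
    (hadd : ∀ a b, e (a + b) = e a * e b) : ∃ ℓ : Fin L, ∀ m, e m = star (fDFT L ℓ m) := by
  let ψ : AddChar (Fin L) ℂ := ⟨e, he0, hadd⟩
  have hpow (n : ℕ) : e (Fin.ofNat L n) = e 1 ^ n := by
    rw [← Fin.nsmul_one_eq_ofNat]; exact ψ.map_nsmul_eq_pow n 1
  have hroot : e 1 ^ L = 1 := by rw [← hpow, Fin.ofNat_self, he0]
  obtain ⟨ℓ, hℓL, hℓ⟩ := (Complex.isPrimitiveRoot_exp L (NeZero.ne L)).eq_pow_of_pow_eq_one hroot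
  exact ⟨⟨ℓ, hℓL⟩, fun m => by rw [star_fDFT, pow_mul, hℓ, ← hpow, Fin.ofNat_val_eq_self]⟩

theorem stmt0_general (L : ℕ) [NeZero L] (φ : Fin L → ℝ) (hφ0 : φ 0 = 0)
    (C : Matrix (Fin L) (Fin L) ℂ)
    (hC : ∀ k₁ k₂, C k₁ k₂ = Complex.exp (Complex.I * (φ (k₂ - k₁) : ℂ)))
    (hPSD : C.PosSemidef) :
    ∃ ℓ : Fin L, ∀ k m : Fin L, C k m = fDFT L ℓ k * star (fDFT L ℓ m) := by
  set e : Fin L → ℂ := fun m => Complex.exp (Complex.I * (φ m : ℂ))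
  have he0 : e 0 = 1 := by simp [e, hφ0]
  have hnorm (m : Fin L) : ‖e m‖ = 1 := Complex.norm_exp_I_mul_ofReal _
  have hadd := map_add_of_posSemidef_of_apply_eq_sub hPSD hC he0 hnorm
  obtain ⟨ℓ, hℓ⟩ := exists_eq_star_fDFT_of_map_add he0 hadd
  refine ⟨ℓ, fun k m => ?_⟩
  have hk : e k * star (e k) = 1 := by
    rw [Complex.star_def, RCLike.mul_conj, hnorm]; simp
  calc C k m = e (m - k) * (e k * star (e k)) := by rw [hk, mul_one, hC]
    _ = e m * star (e k) := by rw [← mul_assoc, ← hadd, sub_add_cancel]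
    _ = fDFT L ℓ k * star (fDFT L ℓ m) := by rw [hℓ, hℓ, star_star, mul_comm]

/-- A Hermitian PSD circulant matrix whose entries are unit-modulus phases
`C[k₁,k₂] = e^{iφ_{(k₂-k₁) mod L}}` (with `φ₀ = 0`) is a rank-one DFT projection
`f_ℓ f_ℓ^*` for some `ℓ`. -/
theorem stmt0 (L : ℕ) [NeZero L] (φ : Fin L → ℝ) (hφ0 : φ 0 = 0)
    (hφ : ∀ m, φ m ∈ Set.Ico (0 : ℝ) (2 * Real.pi))
    (C : Matrix (Fin L) (Fin L) ℂ)
    (hC : ∀ k₁ k₂, C k₁ k₂ = Complex.exp (Complex.I * (φ (k₂ - k₁) : ℂ)))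
    (hHerm : C.IsHermitian) (hPSD : C.PosSemidef) :
    ∃ ℓ : Fin L, ∀ k m : Fin L, C k m = fDFT L ℓ k * star (fDFT L ℓ m) :=
  stmt0_general L φ hφ0 C hC hPSD
end

section
/- Let $C \in \mathbb{C}^{L \times L}$ be a Hermitian matrix with unit-modulus entries, i.e., $|C[k_1,k_2]| = 1$ for all $k_1,k_2$. If $C$ is positive semidefinite, then $C$ has rank one. -/
open Matrix
open scoped ComplexOrder

namespace Matrix

variable {m n 𝕜 : Type*}

theorem rank_vecMulVec_of_ne_zero [Fintype n] {K : Type*} [Field K] {w : m → K} {v : n → K}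
    (hw : w ≠ 0) (hv : v ≠ 0) : (vecMulVec w v).rank = 1 := by
  refine le_antisymm (rank_vecMulVec_le w v) (Nat.one_le_iff_ne_zero.mpr fun h => ?_)
  classical
  rw [rank, Submodule.finrank_eq_zero, LinearMap.range_eq_bot, ← toLin'_apply',
    LinearEquiv.map_eq_zero_iff] at h
  obtain ⟨a, ha⟩ := Function.ne_iff.mp hw
  obtain ⟨b, hb⟩ := Function.ne_iff.mp hv
  exact mul_ne_zero ha hb (congrFun₂ h a b)

namespace PosSemidef

variable [RCLike 𝕜] {A : Matrix n n 𝕜}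

theorem apply_self_eq_one_of_norm_eq_one (hA : A.PosSemidef) {i : n} (h : ‖A i i‖ = 1) :
    A i i = 1 := by
  rw [← RCLike.norm_of_nonneg' hA.diag_nonneg, h, RCLike.ofReal_one]

variable [Fintype n]

/-- Equality in the Cauchy–Schwarz inequality `‖A i j‖ ^ 2 ≤ A i i * A j j` forces column `j`
to be a multiple of column `i`. -/
theorem apply_eq_mul_apply_of_mul_eq [DecidableEq n] (hA : A.PosSemidef) {i j : n}
    (hi : A i i = 1) (hij : A j i * A i j = A j j) (k : n) : A k j = A k i * A i j := by
  set z : n → 𝕜 := Pi.single j 1 - A i j • Pi.single i 1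
  have hAz k : (A *ᵥ z) k = A k j - A k i * A i j := by
    simp [z, mulVec_sub, mulVec_smul, mulVec_single, mul_comm]
  have hzero : A *ᵥ z = 0 := by
    rw [← hA.dotProduct_mulVec_zero_iff]
    have hAzi : (A *ᵥ z) i = 0 := by rw [hAz, hi, one_mul, sub_self]
    have hAzj : (A *ᵥ z) j = 0 := by rw [hAz, hij, sub_self]
    simp [z, sub_dotProduct, smul_dotProduct, hAzi, hAzj]
  simpa [hAz, sub_eq_zero] using congrFun hzero k

theorem eq_vecMulVec_of_norm_apply_eq_one (hA : A.PosSemidef) (hnorm : ∀ i j, ‖A i j‖ = 1)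
    (i : n) : A = vecMulVec (fun k => A k i) (A i) := by
  classical
  have hdiag k : A k k = 1 := hA.apply_self_eq_one_of_norm_eq_one (hnorm k k)
  ext k j
  rw [vecMulVec_apply]
  refine hA.apply_eq_mul_apply_of_mul_eq (hdiag i) ?_ k
  rw [← hA.isHermitian.apply i j, RCLike.star_def, RCLike.mul_conj, hnorm, hdiag]
  simp

end PosSemidef

end Matrix

theorem stmt2_general (L : ℕ) (hL : 0 < L) (C : Matrix (Fin L) (Fin L) ℂ)
    (hmod : ∀ k₁ k₂, ‖C k₁ k₂‖ = 1)
    (hPSD : C.PosSemidef) : C.rank = 1 := by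
  set i : Fin L := ⟨0, hL⟩
  have hne (v : Fin L → ℂ) (hv : ‖v i‖ = 1) : v ≠ 0 := by
    rintro rfl
    simp at hv
  rw [hPSD.eq_vecMulVec_of_norm_apply_eq_one hmod i]
  exact rank_vecMulVec_of_ne_zero (hne _ (hmod i i)) (hne _ (hmod i i))

/-- A Hermitian positive semidefinite matrix all of whose entries have modulus one
has rank one. -/
theorem stmt2 (L : ℕ) (hL : 0 < L) (C : Matrix (Fin L) (Fin L) ℂ)
    (hHerm : C.IsHermitian) (hmod : ∀ k₁ k₂, ‖C k₁ k₂‖ = 1)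
    (hPSD : C.PosSemidef) : C.rank = 1 :=
  stmt2_general L hL C hmod hPSD
end

section
/- Let $X \in \mathbb{C}^{L\times L}$ be Hermitian. Define $S \in \mathbb{C}^{L^2 \times L^2}$ by $S[k_1 + iL,\, k_2 + jL] = X[k_1,k_2] \cdot \overline{X[(k_1 - i)\bmod L,\, (k_2 - j)\bmod L]}$ for $k_1,k_2,i,j \in \{0,\ldots,L-1\}$. Then $S$ is Hermitian, and if $X$ is positive semidefinite then $S$ is positive semidefinite. -/
/-!
Writing `X̄` for the entrywise conjugate, the entry `S[(k₁,i),(k₂,j)]` is the entry of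
`X ⊗ X̄` at `((k₁, k₁ - i), (k₂, k₂ - j))`, so `S` is obtained from `X ⊗ X̄` by reindexing rows and
columns along the same map. For Hermitian `X` we have `X̄ = Xᵀ`, and Hermitian and positive
semidefinite matrices are stable under Kronecker products, transposes and such reindexings.
-/

open Matrix Kronecker
open scoped ComplexOrder

namespace Matrix

variable {n α : Type*}

theorem IsHermitian.kronecker [CommMagma α] [StarMul α] {A B : Matrix n n α}
    (hA : A.IsHermitian) (hB : B.IsHermitian) : (A ⊗ₖ B).IsHermitian := by
  rw [IsHermitian, conjTranspose_kronecker, hA.eq, hB.eq]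

theorem IsHermitian.eq_submatrix_kronecker_transpose [Sub n] [Mul α] [Star α]
    {X : Matrix n n α} (hX : X.IsHermitian) {S : Matrix (n × n) (n × n) α}
    (hS : ∀ k₁ i k₂ j, S (k₁, i) (k₂, j) = X k₁ k₂ * star (X (k₁ - i) (k₂ - j))) :
    S = (X ⊗ₖ Xᵀ).submatrix (fun p => (p.1, p.1 - p.2)) (fun p => (p.1, p.1 - p.2)) := by
  ext ⟨k₁, i⟩ ⟨k₂, j⟩
  rw [hS, submatrix_apply, kroneckerMap_apply, transpose_apply, hX.apply]

end Matrix

/-- For Hermitian `X`, the `L² × L²` matrix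
`S[(k₁,i),(k₂,j)] = X[k₁,k₂] ⬝ conj X[(k₁-i) mod L, (k₂-j) mod L]` is Hermitian, and if
`X` is PSD then `S` is PSD. -/
theorem stmt5 (L : ℕ) (X : Matrix (Fin L) (Fin L) ℂ) (hX : X.IsHermitian)
    (S : Matrix (Fin L × Fin L) (Fin L × Fin L) ℂ)
    (hS : ∀ k₁ i k₂ j : Fin L,
      S (k₁, i) (k₂, j) = X k₁ k₂ * star (X (k₁ - i) (k₂ - j))) :
    S.IsHermitian ∧ (X.PosSemidef → S.PosSemidef) := by
  rw [hX.eq_submatrix_kronecker_transpose hS]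
  exact ⟨(hX.kronecker hX.transpose).submatrix _,
    fun hXpos => (hXpos.kronecker hXpos.transpose).submatrix _⟩
end

section
/- Let $\hat{\Sigma} \in \mathbb{C}^{L\times L}$ be Hermitian PSD with $\hat{\Sigma} = \lambda v v^*$ for some $\lambda > 0$ and $v \in \mathbb{C}^L$ with $v[k] \neq 0$ for all $k$ (i.e., rank one with nowhere-vanishing eigenvector). Suppose $\widetilde{X} = \hat{\Sigma} \odot \operatorname{Circulant}\{[1, e^{i\psi_1}, \ldots, e^{i\psi_{L-1}}]\}$ is Hermitian and positive semidefinite for some angles $\psi_1,\ldots,\psi_{L-1}$. Then there exists $\ell \in \{0,\ldots,L-1\}$ such that $\widetilde{X} = \operatorname{diag}(f_\ell) \cdot \hat{\Sigma} \cdot \operatorname{diag}(f_\ell)^*$, where $f_\ell[k] = e^{-2\pi i k \ell / L}$. -/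
/-!
Conjugating `X̃ = diag(v) (λ C) diag(v)^*` by `diag(v)⁻¹` shows that the circulant phase matrix
`C[k, m] = e^{iψ(m - k)}` is positive semidefinite. A PSD matrix with unit-modulus entries is a
Gram matrix of unit vectors that are pairwise equal up to phase, so `C[i, k] = C[i, j] C[j, k]`;
for a circulant matrix this says that `d ↦ e^{iψ d}` is an additive character of `ℤ/L`, i.e. the
conjugate of some DFT vector `f_ℓ`, and then `X̃ = diag(f_ℓ) Σ diag(f_ℓ)^*` entrywise.
-/

open Matrix
open scoped ComplexOrder

namespace Matrix.PosSemidef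

variable {n : Type*} {C : Matrix n n ℂ}

theorem apply_self_eq_one_of_norm_eq_one_s7 (hC : C.PosSemidef) {i : n} (h : ‖C i i‖ = 1) :
    C i i = 1 := by
  rw [Complex.eq_coe_norm_of_nonneg hC.diag_nonneg, h, Complex.ofReal_one]

theorem apply_eq_mul_of_norm_eq_one [Fintype n] (hC : C.PosSemidef)
    (h : ∀ i j, ‖C i j‖ = 1) (i j k : n) : C i k = C i j * C j k := by
  classical
  have hdiag (i : n) : C i i = 1 := hC.apply_self_eq_one_of_norm_eq_one_s7 (h i i)
  have hunit : starRingEnd ℂ (C j k) * C j k = 1 := by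
    rw [Complex.conj_mul', h, Complex.ofReal_one, one_pow]
  -- `x` is isotropic for the quadratic form of `C`, hence lies in its kernel.
  set x : n → ℂ := Pi.single j (C j k) - Pi.single k 1
  have hCx : C *ᵥ x = fun i => C i j * C j k - C i k := by
    ext i
    simp [x, mulVec_sub, mulVec_single, mul_comm]
  have hx : star x ⬝ᵥ C *ᵥ x = 0 := by
    rw [hCx]
    simp [x, sub_dotProduct, hdiag, ← hC.isHermitian.apply k j, hunit]
  have hi := congrFun ((hC.dotProduct_mulVec_zero_iff x).mp hx) i
  rw [hCx] at hi
  exact (sub_eq_zero.mp hi).symm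

end Matrix.PosSemidef

def AddChar.ofPosSemidefCirculant {G : Type*} [AddCommGroup G] [Fintype G] {g : G → ℂ}
    (hg : ∀ d, ‖g d‖ = 1) (hC : (circulant g).PosSemidef) : AddChar G ℂ where
  toFun := g
  map_zero_eq_one' := by
    simpa using hC.apply_self_eq_one_of_norm_eq_one_s7 (i := 0) (by simpa using hg 0)
  map_add_eq_mul' a b := by
    simpa using hC.apply_eq_mul_of_norm_eq_one (fun i j => hg (i - j)) (a + b) b 0

open Fin.NatCast in
theorem AddChar.exists_apply_eq_star_fDFT {L : ℕ} [NeZero L] (χ : AddChar (Fin L) ℂ) :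
    ∃ ℓ : Fin L, ∀ k, χ k = star (fDFT L ℓ k) := by
  have hχ_pow (k : Fin L) : χ k = χ 1 ^ (k : ℕ) := by
    rw [← map_nsmul_eq_pow, nsmul_one, Fin.cast_val_eq_self]
  have hroot : χ 1 ^ L = 1 := by
    rw [← map_nsmul_eq_pow, nsmul_one, Fin.natCast_self, map_zero_eq_one]
  obtain ⟨ℓ, hℓL, hℓ⟩ :=
    (Complex.isPrimitiveRoot_exp L (NeZero.ne L)).eq_pow_of_pow_eq_one hroot
  exact ⟨⟨ℓ, hℓL⟩, fun k => by rw [star_fDFT, pow_mul, hℓ, hχ_pow]⟩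

theorem stmt7_general (L : ℕ) [NeZero L] (lam : ℝ) (hlam : 0 < lam)
    (v : Fin L → ℂ) (hv : ∀ k, v k ≠ 0)
    (Sig : Matrix (Fin L) (Fin L) ℂ)
    (hSig : ∀ k m, Sig k m = (lam : ℂ) * v k * star (v m))
    (ψ : Fin L → ℝ)
    (Xt : Matrix (Fin L) (Fin L) ℂ)
    (hXt : ∀ k₁ k₂, Xt k₁ k₂ = Sig k₁ k₂ * Complex.exp (Complex.I * (ψ (k₂ - k₁) : ℂ)))
    (hPSD : Xt.PosSemidef) :
    ∃ ℓ : Fin L,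
      Xt = Matrix.diagonal (fDFT L ℓ) * Sig * (Matrix.diagonal (fDFT L ℓ))ᴴ := by
  set g : Fin L → ℂ := fun d => Complex.exp (Complex.I * ψ d)
  have hg (d : Fin L) : ‖g d‖ = 1 := by
    simp only [g, mul_comm Complex.I, Complex.norm_exp_ofReal_mul_I]
  have hXt_conj : (lam : ℂ)⁻¹ • Xt = diagonal v * (circulant g)ᵀ * star (diagonal v) := by
    have : (lam : ℂ) ≠ 0 := by exact_mod_cast hlam.ne'
    ext k m
    simp only [Matrix.smul_apply, hXt, hSig, smul_eq_mul, star_eq_conjTranspose, diagonal_conjTranspose,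
      mul_diagonal, diagonal_mul, transpose_apply, circulant_apply, Pi.star_apply, g]
    field_simp
  have hC : (circulant g).PosSemidef := by
    have hD : IsUnit (diagonal v) := isUnit_diagonal.mpr (Pi.isUnit_iff.mpr fun k => (hv k).isUnit)
    rw [← posSemidef_transpose_iff, ← hD.posSemidef_star_right_conjugate_iff, ← hXt_conj]
    exact hPSD.smul (by positivity)
  set χ := AddChar.ofPosSemidefCirculant hg hC
  have hχ (d : Fin L) : χ d = g d := rfl
  obtain ⟨ℓ, hℓ⟩ := χ.exists_apply_eq_star_fDFT
  refine ⟨ℓ, ?_⟩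
  ext k m
  have hf (k : Fin L) : fDFT L ℓ k = star (g k) := by rw [← hχ, hℓ, star_star]
  have hg_sub : g (m - k) = star (g k) * g m := by
    rw [← hχ, χ.map_sub_eq_div, hχ, hχ, div_eq_inv_mul, Complex.inv_eq_conj (hg k)]
    rfl
  rw [hXt]
  change Sig k m * g (m - k) = _
  simp only [diagonal_conjTranspose, mul_diagonal, diagonal_mul, Pi.star_apply, hf, star_star,
    hg_sub]
  ring

/-- Circulant phase retrieval for rank-one covariances: if `Σ = λ v v^*` with `λ > 0`
and `v` nowhere vanishing, and `X̃ = Σ ⊙ Circulant{[1, e^{iψ₁}, …, e^{iψ_{L-1}}]}` is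
Hermitian and PSD, then `X̃ = diag(f_ℓ) Σ diag(f_ℓ)^*` for some `ℓ`. -/
theorem stmt7 (L : ℕ) [NeZero L] (lam : ℝ) (hlam : 0 < lam)
    (v : Fin L → ℂ) (hv : ∀ k, v k ≠ 0)
    (Sig : Matrix (Fin L) (Fin L) ℂ)
    (hSig : ∀ k m, Sig k m = (lam : ℂ) * v k * star (v m))
    (ψ : Fin L → ℝ) (hψ0 : ψ 0 = 0)
    (Xt : Matrix (Fin L) (Fin L) ℂ)
    (hXt : ∀ k₁ k₂, Xt k₁ k₂ = Sig k₁ k₂ * Complex.exp (Complex.I * (ψ (k₂ - k₁) : ℂ)))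
    (hHerm : Xt.IsHermitian) (hPSD : Xt.PosSemidef) :
    ∃ ℓ : Fin L,
      Xt = Matrix.diagonal (fDFT L ℓ) * Sig * (Matrix.diagonal (fDFT L ℓ))ᴴ :=
  stmt7_general L lam hlam v hv Sig hSig ψ Xt hXt hPSD
end

section
/- Let $d_0, d_1, \ldots, d_{L-1} \in \mathbb{C}^L$ with $d_m[k] \neq 0$ for all $m,k$, and set $G_m = d_m d_m^*$. Suppose $G_0^\star = G_0$ and $G_1^\star, \ldots, G_{L-1}^\star$ are Hermitian PSD matrices satisfying, for all $k_1,k_2,m \in \{0,\ldots,L-1\}$ (indices mod $L$): $G_m[k_1,k_2] + G_{k_2-k_1}[k_1,k_1+m] = G^\star_m[k_1,k_2] + G^\star_{k_2-k_1}[k_1,k_1+m]$. Then $G_m^\star = G_m$ for all $m$. -/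
/-!
Write `Eₘ = G⋆ₘ - Gₘ` and say that `(m, n)` is good if the `n`-th cyclic diagonal of `Eₘ`
vanishes. The trispectrum equations with `k₂ = k₁ + n` say exactly that `Eₘ[k, k+n]` and
`Eₙ[k, k+m]` are opposite, so goodness is symmetric; `(m, 0)` is good because `G⋆₀ = G₀`, and then
so is `(n, n)`. Thus `G⋆ₙ` agrees with the rank-one matrix `dₙ dₙ*` on the `2 × 2` principal
submatrix at `k` and `k + n`, which is singular, so positive semidefiniteness makes column `k + n`
of `G⋆ₙ` the multiple `conj dₙ[k+n] / conj dₙ[k]` of column `k`, exactly as in `Gₙ`. Hence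
`(n, m)` good implies `(n, m + n)` good, and Euclid's algorithm makes every pair good.
-/

open Matrix
open scoped ComplexOrder

theorem Matrix.PosSemidef.mul_star_eq_of_principal_eq {𝕜 n : Type*} [RCLike 𝕜] [Fintype n]
    [DecidableEq n] {A : Matrix n n 𝕜} (hA : A.PosSemidef) (u : n → 𝕜) {i j : n}
    (hii : A i i = u i * star (u i)) (hjj : A j j = u j * star (u j))
    (hij : A i j = u i * star (u j)) (k : n) :
    A k i * star (u j) = A k j * star (u i) := by
  -- `x` spans the kernel of the singular principal submatrix `[[A i i, A i j], [A j i, A j j]]`.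
  set x : n → 𝕜 := Pi.single i (star (u j)) - Pi.single j (star (u i))
  have hAx : ∀ l, (A *ᵥ x) l = A l i * star (u j) - A l j * star (u i) := by
    intro l
    simp [x, mulVec_sub, mulVec_single, mul_comm]
  have hx_star : star x = Pi.single i (u j) - Pi.single j (u i) := by
    simp [x]
  have hji : A j i = u j * star (u i) := by
    rw [← hA.isHermitian.apply j i, hij, star_mul', star_star, mul_comm]
  have hquad : star x ⬝ᵥ A *ᵥ x = 0 := by
    rw [hx_star, sub_dotProduct, single_dotProduct, single_dotProduct, hAx, hAx, hii, hjj, hij, hji]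
    ring
  have := congrFun ((hA.dotProduct_mulVec_zero_iff x).mp hquad) k
  rwa [hAx, Pi.zero_apply, sub_eq_zero] at this

/-- Euclid's algorithm on `(a, b)`. -/
theorem forall_natCast_of_symm_of_add {M : Type*} [AddMonoidWithOne M] (R : M → M → Prop)
    (symm : ∀ x y, R x y → R y x) (zero : ∀ x, R x 0) (add : ∀ x y, R x y → R x (y + x))
    (a b : ℕ) : R a b := by
  induction a, b using Nat.gcd.induction with
  | H0 b => exact symm _ _ (by simpa using zero b)
  | H1 a b _ ih =>
    have key : ∀ q : ℕ, R a (b % a + q * a : ℕ) := by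
      intro q
      induction q with
      | zero => simpa using symm _ _ ih
      | succ q ihq => simpa [add_mul, ← add_assoc] using add _ _ ihq
    simpa [Nat.mod_add_div'] using key (b / a)

theorem Fin.forall_of_symm_of_add {L : ℕ} [NeZero L] (R : Fin L → Fin L → Prop)
    (symm : ∀ x y, R x y → R y x) (zero : ∀ x, R x 0) (add : ∀ x y, R x y → R x (y + x))
    (a b : Fin L) : R a b := by
  open Fin.CommRing in simpa using forall_natCast_of_symm_of_add R symm zero add a b

section Trispectrum

variable {L : ℕ} [NeZero L] {G Gstar : Fin L → Matrix (Fin L) (Fin L) ℂ}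
  (heq : ∀ k₁ k₂ m : Fin L,
    G m k₁ k₂ + G (k₂ - k₁) k₁ (k₁ + m) = Gstar m k₁ k₂ + Gstar (k₂ - k₁) k₁ (k₁ + m))
include heq

theorem trispectrum_sub_apply_add_eq_neg (m n k : Fin L) :
    Gstar m k (k + n) - G m k (k + n) = -(Gstar n k (k + m) - G n k (k + m)) := by
  have h := heq k (k + n) m
  rw [add_sub_cancel_left] at h
  linear_combination -h

theorem trispectrum_apply_add_self (n k : Fin L) : Gstar n k (k + n) = G n k (k + n) := by
  linear_combination trispectrum_sub_apply_add_eq_neg heq n n k / 2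

theorem trispectrum_diag (hG0 : Gstar 0 = G 0) (n k : Fin L) : Gstar n k k = G n k k := by
  simpa [hG0, sub_eq_zero] using trispectrum_sub_apply_add_eq_neg heq n 0 k

theorem trispectrum_apply_add_eq_of_apply_eq {d : Fin L → Fin L → ℂ} (hd : ∀ m k, d m k ≠ 0)
    (hG : ∀ m k₁ k₂, G m k₁ k₂ = d m k₁ * star (d m k₂)) (hG0 : Gstar 0 = G 0)
    (hPSD : ∀ m, m ≠ 0 → (Gstar m).PosSemidef) {n k₁ k₂ : Fin L}
    (h : Gstar n k₁ k₂ = G n k₁ k₂) : Gstar n k₁ (k₂ + n) = G n k₁ (k₂ + n) := by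
  rcases eq_or_ne n 0 with rfl | hn
  · simpa using h
  have hcol := (hPSD n hn).mul_star_eq_of_principal_eq (d n) (i := k₂) (j := k₂ + n)
    (by rw [trispectrum_diag heq hG0, hG]) (by rw [trispectrum_diag heq hG0, hG])
    (by rw [trispectrum_apply_add_self heq, hG]) k₁
  rw [h, hG] at hcol
  rw [hG]
  refine mul_right_cancel₀ (star_ne_zero.mpr (hd n k₂)) ?_
  linear_combination -hcol

end Trispectrum

/-- Uniqueness of the minimizer in the diagonal-recovery convex program: if
`G_m = d_m d_m^*` with nowhere-vanishing `d_m`, `G⋆₀ = G₀`, the `G⋆_m` (for `m ≠ 0`)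
are Hermitian PSD, and the trispectrum equations
`G_m[k₁,k₂] + G_{k₂-k₁}[k₁,k₁+m] = G⋆_m[k₁,k₂] + G⋆_{k₂-k₁}[k₁,k₁+m]` hold for all
indices (mod `L`), then `G⋆_m = G_m` for all `m`. -/
theorem stmt15 (L : ℕ) [NeZero L] (d : Fin L → Fin L → ℂ) (hd : ∀ m k, d m k ≠ 0)
    (G Gstar : Fin L → Matrix (Fin L) (Fin L) ℂ)
    (hG : ∀ m k₁ k₂, G m k₁ k₂ = d m k₁ * star (d m k₂))
    (hG0 : Gstar 0 = G 0)
    (hPSD : ∀ m, m ≠ 0 → (Gstar m).PosSemidef)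
    (heq : ∀ k₁ k₂ m : Fin L,
      G m k₁ k₂ + G (k₂ - k₁) k₁ (k₁ + m) = Gstar m k₁ k₂ + Gstar (k₂ - k₁) k₁ (k₁ + m)) :
    ∀ m, Gstar m = G m := by
  have hdiagonals : ∀ m n, ∀ k, Gstar m k (k + n) = G m k (k + n) := by
    refine Fin.forall_of_symm_of_add (fun m n ↦ ∀ k, Gstar m k (k + n) = G m k (k + n))
      ?_ ?_ ?_
    · intro m n h k
      linear_combination trispectrum_sub_apply_add_eq_neg heq m n k - h k
    · simpa using trispectrum_diag heq hG0
    · intro n m h k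
      rw [← add_assoc]
      exact trispectrum_apply_add_eq_of_apply_eq heq hd hG hG0 hPSD (h k)
  intro m
  ext k₁ k₂
  simpa using hdiagonals m (k₂ - k₁) k₁
end

section
/- Let $\hat{\Sigma} \in \mathbb{C}^{L\times L}$ satisfy $\hat{\Sigma}[i,j] \neq 0$ for all $i,j$, and let $X \in \mathbb{C}^{L\times L}$ be any matrix satisfying $X[k,k] = \hat{\Sigma}[k,k]$ for all $k$ and $X[k_1,k_2]\overline{X[k_3-k_2+k_1,k_3]} + X[k_1,k_3-k_2+k_1]\overline{X[k_2,k_3]} = \hat{\Sigma}[k_1,k_2]\overline{\hat{\Sigma}[k_3-k_2+k_1,k_3]} + \hat{\Sigma}[k_1,k_3-k_2+k_1]\overline{\hat{\Sigma}[k_2,k_3]}$ for all $k_1,k_2,k_3$ (indices mod $L$). Then there exist angles $\varphi_1,\ldots,\varphi_{L-1} \in [0,2\pi)$ such that $X = \hat{\Sigma} \odot \operatorname{Circulant}\{[1, e^{i\varphi_1},\ldots, e^{i\varphi_{L-1}}]\}$. -/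
/-!
Write `R i j = X i j / Σ i j`. Taking `k₁ = k₂` in the moment equations and using the diagonal
gives `|X| = |Σ|`, so every `R i j` is a unit complex number. If `x / s` and `y / t` have modulus
one, then `x * conj y = s * conj t` forces `x / s = y / t`. With `k₂ = k₁ + 1, k₃ = k₁ + 2` both
summands of the moment equation coincide, so `R` is constant along the first cyclic diagonal;
with `k₂ = k₁ + a, k₃ = k₁ + a + 1` the second summand lives on that diagonal and is therefore
already matched, which makes `R` constant along the `a`-th diagonal. Hence `R i j` depends only
on `j - i`, and its argument, reduced to `[0, 2π)`, is the phase `φ (j - i)`.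
-/

open Matrix

namespace Complex

theorem exp_I_mul_toIcoMod_arg {z : ℂ} (hz : ‖z‖ = 1) :
    exp (I * toIcoMod Real.two_pi_pos 0 z.arg) = z := by
  rw [← self_sub_toIcoDiv_zsmul, mul_comm]
  have := exp_mul_I_periodic.sub_int_mul_eq (x := (z.arg : ℂ)) (toIcoDiv Real.two_pi_pos 0 z.arg)
  push_cast
  rw [zsmul_eq_mul, this]
  simpa [hz] using norm_mul_exp_arg_mul_I z

theorem div_eq_div_of_mul_star_eq {x y s t : ℂ} (hs : s ≠ 0) (ht : t ≠ 0) (hy : ‖y‖ = ‖t‖)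
    (hxy : x * star y = s * star t) : x / s = y / t := by
  have hyt : y * star y = t * star t := by
    simp only [star_def, mul_conj', hy]
  have hw : x / s * star (y / t) = 1 := by
    rw [star_div₀, div_mul_div_comm, hxy, div_self (mul_ne_zero hs (star_ne_zero.2 ht))]
  have hyt' : y / t * star (y / t) = 1 := by
    rw [star_div₀, div_mul_div_comm, hyt, div_self (mul_ne_zero ht (star_ne_zero.2 ht))]
  calc x / s = x / s * star (y / t) * (y / t) := by rw [mul_assoc, mul_comm _ (y / t), hyt', mul_one]
    _ = y / t := by rw [hw, one_mul]

theorem mul_star_eq_of_div_eq {x y s t : ℂ} (hs : s ≠ 0) (ht : t ≠ 0) (hy : ‖y‖ = ‖t‖)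
    (h : x / s = y / t) : x * star y = s * star t := by
  have hyt : y * star y = t * star t := by
    simp only [star_def, mul_conj', hy]
  rw [div_eq_div_iff hs ht] at h
  refine mul_right_cancel₀ ht ?_
  linear_combination star y * h + s * hyt

end Complex

open Fin.NatCast in
theorem Fin.apply_eq_apply_of_add_one {L : ℕ} [NeZero L] {α : Type*} {f : Fin L → α}
    (hf : ∀ k, f (k + 1) = f k) (k l : Fin L) : f k = f l := by
  have hn : ∀ n : ℕ, f (n : Fin L) = f 0 := by
    intro n
    induction n with
    | zero => rfl
    | succ n ih => rw [Nat.cast_succ, hf, ih]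
  rw [← Fin.cast_val_eq_self k, ← Fin.cast_val_eq_self l, hn, hn]

/-- The moment equations of the paper, with the cyclic index group `ℤ / L` generalized to `G`. -/
def TrispectrumEqs {G : Type*} [AddCommGroup G] (Sig X : Matrix G G ℂ) : Prop :=
  ∀ k₁ k₂ k₃ : G,
    X k₁ k₂ * star (X (k₃ - k₂ + k₁) k₃) + X k₁ (k₃ - k₂ + k₁) * star (X k₂ k₃) =
      Sig k₁ k₂ * star (Sig (k₃ - k₂ + k₁) k₃) + Sig k₁ (k₃ - k₂ + k₁) * star (Sig k₂ k₃)

namespace TrispectrumEqs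

section AddCommGroup

variable {G : Type*} [AddCommGroup G] {Sig X : Matrix G G ℂ}

theorem norm_eq (h : TrispectrumEqs Sig X) (hdiag : ∀ k, X k k = Sig k k) (i j : G) :
    ‖X i j‖ = ‖Sig i j‖ := by
  have hij := h i i j
  rw [sub_add_cancel, hdiag, hdiag] at hij
  have hsq : ((‖X i j‖ ^ 2 : ℝ) : ℂ) = ((‖Sig i j‖ ^ 2 : ℝ) : ℂ) := by
    simpa only [Complex.star_def, Complex.mul_conj', Complex.ofReal_pow] using add_left_cancel hij
  exact (pow_left_inj₀ (norm_nonneg _) (norm_nonneg _) two_ne_zero).1 (Complex.ofReal_injective hsq)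

theorem div_eq_div_add_add (h : TrispectrumEqs Sig X) (hdiag : ∀ k, X k k = Sig k k)
    (hnz : ∀ i j, Sig i j ≠ 0) (k d : G) :
    X k (k + d) / Sig k (k + d) = X (k + d) (k + d + d) / Sig (k + d) (k + d + d) := by
  have hkd := h k (k + d) (k + d + d)
  rw [show k + d + d - (k + d) + k = k + d by abel] at hkd
  exact Complex.div_eq_div_of_mul_star_eq (hnz _ _) (hnz _ _) (h.norm_eq hdiag _ _)
    (by linear_combination hkd / 2)

theorem div_eq_div_add_of_forall_div_eq (h : TrispectrumEqs Sig X) (hdiag : ∀ k, X k k = Sig k k)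
    (hnz : ∀ i j, Sig i j ≠ 0) {d : G}
    (hd : ∀ k l, X k (k + d) / Sig k (k + d) = X l (l + d) / Sig l (l + d)) (k a : G) :
    X k (k + a) / Sig k (k + a) = X (k + d) (k + d + a) / Sig (k + d) (k + d + a) := by
  have hkad := h k (k + a) (k + a + d)
  rw [show k + a + d - (k + a) + k = k + d by abel,
    Complex.mul_star_eq_of_div_eq (hnz _ _) (hnz _ _) (h.norm_eq hdiag _ _) (hd k (k + a))] at hkad
  rw [add_right_comm k d a]
  exact Complex.div_eq_div_of_mul_star_eq (hnz _ _) (hnz _ _) (h.norm_eq hdiag _ _)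
    (add_right_cancel hkad)

end AddCommGroup

theorem div_eq_div_zero_sub {L : ℕ} [NeZero L] {Sig X : Matrix (Fin L) (Fin L) ℂ}
    (h : TrispectrumEqs Sig X) (hdiag : ∀ k, X k k = Sig k k) (hnz : ∀ i j, Sig i j ≠ 0)
    (k₁ k₂ : Fin L) : X k₁ k₂ / Sig k₁ k₂ = X 0 (k₂ - k₁) / Sig 0 (k₂ - k₁) := by
  have hone : ∀ k l, X k (k + 1) / Sig k (k + 1) = X l (l + 1) / Sig l (l + 1) :=
    Fin.apply_eq_apply_of_add_one fun k => (h.div_eq_div_add_add hdiag hnz k 1).symm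
  have hconst : ∀ a, X k₁ (k₁ + a) / Sig k₁ (k₁ + a) = X 0 (0 + a) / Sig 0 (0 + a) := fun a =>
    Fin.apply_eq_apply_of_add_one (f := fun k => X k (k + a) / Sig k (k + a))
      (fun k => (h.div_eq_div_add_of_forall_div_eq hdiag hnz hone k a).symm) k₁ 0
  simpa using hconst (k₂ - k₁)

end TrispectrumEqs

/-- Solutions of the moment equations ("only if" direction of Lemma 1): if `Σ` has no
zero entries and `X` matches `Σ` on the diagonal (power spectrum) and satisfies the
trispectrum equations, then `X` equals `Σ` multiplied entrywise by a circulant matrix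
of phases `[1, e^{iφ₁}, …, e^{iφ_{L-1}}]` with `φ_m ∈ [0, 2π)`. -/
theorem stmt17 (L : ℕ) [NeZero L] (Sig X : Matrix (Fin L) (Fin L) ℂ)
    (hnz : ∀ i j, Sig i j ≠ 0)
    (hdiag : ∀ k, X k k = Sig k k)
    (htri : ∀ k₁ k₂ k₃ : Fin L,
      X k₁ k₂ * star (X (k₃ - k₂ + k₁) k₃) + X k₁ (k₃ - k₂ + k₁) * star (X k₂ k₃) =
        Sig k₁ k₂ * star (Sig (k₃ - k₂ + k₁) k₃) +
          Sig k₁ (k₃ - k₂ + k₁) * star (Sig k₂ k₃)) :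
    ∃ φ : Fin L → ℝ, φ 0 = 0 ∧ (∀ m, φ m ∈ Set.Ico (0 : ℝ) (2 * Real.pi)) ∧
      ∀ k₁ k₂, X k₁ k₂ = Sig k₁ k₂ * Complex.exp (Complex.I * (φ (k₂ - k₁) : ℂ)) := by
  have h : TrispectrumEqs Sig X := htri
  set u : Fin L → ℂ := fun m => X 0 m / Sig 0 m
  have hu_norm : ∀ m, ‖u m‖ = 1 := fun m => by
    rw [norm_div, h.norm_eq hdiag, div_self (norm_ne_zero_iff.2 (hnz 0 m))]
  have hu_zero : u 0 = 1 := by simp [u, hdiag, hnz]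
  refine ⟨fun m => toIcoMod Real.two_pi_pos 0 (u m).arg, by simp [hu_zero],
    fun m => toIcoMod_mem_Ico' _ _, fun k₁ k₂ => ?_⟩
  rw [Complex.exp_I_mul_toIcoMod_arg (hu_norm _), mul_comm]
  exact (div_eq_iff (hnz _ _)).1 (h.div_eq_div_zero_sub hdiag hnz k₁ k₂)
end

section
/- Let $\hat{\Sigma} \in \mathbb{C}^{L\times L}$ be Hermitian PSD of rank $r$, and for each $\ell \in \{0,\ldots,L-1\}$ let $X_\ell = \operatorname{diag}(f_\ell) \cdot \hat{\Sigma} \cdot \operatorname{diag}(f_\ell)^*$ where $f_\ell[k] = e^{-2\pi i k\ell/L}$. Then each $X_\ell$ is Hermitian, PSD, has rank $r$, satisfies $X_\ell[k,k] = \hat{\Sigma}[k,k]$ for all $k$, and satisfies the trispectrum equations $X_\ell[k_1,k_2]\overline{X_\ell[k_3-k_2+k_1,k_3]} + X_\ell[k_1,k_3-k_2+k_1]\overline{X_\ell[k_2,k_3]} = \hat{\Sigma}[k_1,k_2]\overline{\hat{\Sigma}[k_3-k_2+k_1,k_3]} + \hat{\Sigma}[k_1,k_3-k_2+k_1]\overline{\hat{\Sigma}[k_2,k_3]}$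 for all $k_1,k_2,k_3$ (indices mod $L$). -/
open Matrix
open scoped ComplexOrder

/-!
Conjugating `Σ` by the diagonal matrix of a character `ψ` of a finite abelian group multiplies
the entry `Σ[a,b]` by the phase `ψ(a - b)`. Hence positivity and rank are kept, the diagonal is
untouched, and every product `Σ[a,b] · conj Σ[c,d]` with `a + d = b + c` picks up the phase
`ψ(a - b - c + d) = ψ 0 = 1`. Both terms of the trispectrum equations are of this form, and
`k ↦ f_ℓ[k]` is a character of `ℤ/L`.
-/

namespace Matrix

variable {n α : Type*} [Fintype n] [DecidableEq n]

theorem diagonal_mul_mul_conjTranspose_diagonal_apply [Semiring α] [StarRing α]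
    (d : n → α) (A : Matrix n n α) (i j : n) :
    (diagonal d * A * (diagonal d)ᴴ) i j = d i * A i j * star (d j) := by
  rw [diagonal_conjTranspose, mul_diagonal, diagonal_mul]
  rfl

theorem rank_diagonal_mul_mul_conjTranspose_diagonal [Field α] [StarRing α]
    {d : n → α} (hd : ∀ i, d i ≠ 0) (A : Matrix n n α) :
    (diagonal d * A * (diagonal d)ᴴ).rank = A.rank := by
  have hdet : IsUnit (diagonal d).det := by
    rw [det_diagonal]
    exact (Finset.prod_ne_zero_iff.mpr fun i _ => hd i).isUnit
  have hdet' : IsUnit (diagonal d)ᴴ.det := by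
    rw [det_conjTranspose]
    exact hdet.star
  rw [rank_mul_eq_left_of_isUnit_det _ _ hdet', rank_mul_eq_right_of_isUnit_det _ _ hdet]

end Matrix

namespace AddChar

variable {G K : Type*} [Finite G] [RCLike K]

theorem mul_star_self [AddLeftCancelMonoid G] (ψ : AddChar G K) (x : G) :
    ψ x * star (ψ x) = 1 := by
  rw [RCLike.star_def, RCLike.mul_conj, ψ.norm_apply]
  simp

theorem mul_star_mul_star_mul_eq_one [AddCommGroup G] (ψ : AddChar G K) {a b c d : G}
    (h : a + d = b + c) : ψ a * star (ψ b) * star (ψ c) * ψ d = 1 := by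
  simp only [RCLike.star_def, ← map_neg_eq_conj, ← map_add_eq_mul]
  rw [show a + -b + -c + d = 0 by rw [← sub_eq_zero.mpr h]; abel, map_zero_eq_one]

end AddChar

section CharacterConjugation

variable {G K : Type*} [AddCommGroup G] [Fintype G] [DecidableEq G] [RCLike K]
  (ψ : AddChar G K) (A : Matrix G G K)

theorem diagonal_addChar_conj_apply_diag (k : G) :
    (diagonal ψ * A * (diagonal ψ)ᴴ) k k = A k k := by
  rw [diagonal_mul_mul_conjTranspose_diagonal_apply, mul_right_comm, ψ.mul_star_self, one_mul]

theorem diagonal_addChar_conj_apply_mul_star_apply {a b c d : G} (h : a + d = b + c) :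
    (diagonal ψ * A * (diagonal ψ)ᴴ) a b * star ((diagonal ψ * A * (diagonal ψ)ᴴ) c d) =
      A a b * star (A c d) := by
  have hphase := ψ.mul_star_mul_star_mul_eq_one h
  simp only [diagonal_mul_mul_conjTranspose_diagonal_apply, star_mul', star_star]
  linear_combination A a b * star (A c d) * hphase

theorem rank_diagonal_addChar_conj :
    (diagonal ψ * A * (diagonal ψ)ᴴ).rank = A.rank :=
  rank_diagonal_mul_mul_conjTranspose_diagonal
    (fun x => left_ne_zero_of_mul_eq_one (ψ.mul_star_self x)) A

end CharacterConjugation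

def finPowAddChar {M : Type*} [Monoid M] (n : ℕ) [NeZero n] {ζ : M} (hζ : ζ ^ n = 1) :
    AddChar (Fin n) M where
  toFun k := ζ ^ (k : ℕ)
  map_zero_eq_one' := by simp
  map_add_eq_mul' a b := by rw [Fin.val_add, ← pow_eq_pow_mod _ hζ, pow_add]

theorem exp_neg_two_pi_I_mul_div_pow_eq_one (L m : ℕ) (hL : L ≠ 0) :
    Complex.exp (-(2 * Real.pi * Complex.I * m) / L) ^ L = 1 := by
  rw [← Complex.exp_nat_mul, Complex.exp_eq_one_iff]
  refine ⟨-m, ?_⟩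
  field_simp
  push_cast
  ring

theorem fDFT_eq_pow (L : ℕ) (ℓ k : Fin L) :
    fDFT L ℓ k = Complex.exp (-(2 * Real.pi * Complex.I * (ℓ : ℕ)) / L) ^ (k : ℕ) := by
  rw [fDFT, ← Complex.exp_nat_mul]
  ring_nf

noncomputable def dftAddChar (L : ℕ) [NeZero L] (ℓ : Fin L) : AddChar (Fin L) ℂ :=
  finPowAddChar L (exp_neg_two_pi_I_mul_div_pow_eq_one L ℓ (NeZero.ne L))

theorem coe_dftAddChar (L : ℕ) [NeZero L] (ℓ : Fin L) : ⇑(dftAddChar L ℓ) = fDFT L ℓ :=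
  funext fun k => (fDFT_eq_pow L ℓ k).symm

/-- Fundamental ambiguities: every `X_ℓ = diag(f_ℓ) Σ diag(f_ℓ)^*` is Hermitian, PSD,
has rank `r`, matches `Σ` on the diagonal (power spectrum), and satisfies the
trispectrum equations of `Σ`. -/
theorem stmt19 (L r : ℕ) (Sig : Matrix (Fin L) (Fin L) ℂ)
    (hPSD : Sig.PosSemidef) (hrank : Sig.rank = r)
    (X : Fin L → Matrix (Fin L) (Fin L) ℂ)
    (hX : ∀ ℓ, X ℓ = Matrix.diagonal (fDFT L ℓ) * Sig * (Matrix.diagonal (fDFT L ℓ))ᴴ) :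
    ∀ ℓ : Fin L, (X ℓ).IsHermitian ∧ (X ℓ).PosSemidef ∧ (X ℓ).rank = r ∧
      (∀ k, X ℓ k k = Sig k k) ∧
      (∀ k₁ k₂ k₃ : Fin L,
        X ℓ k₁ k₂ * star (X ℓ (k₃ - k₂ + k₁) k₃) +
            X ℓ k₁ (k₃ - k₂ + k₁) * star (X ℓ k₂ k₃) =
          Sig k₁ k₂ * star (Sig (k₃ - k₂ + k₁) k₃) +
            Sig k₁ (k₃ - k₂ + k₁) * star (Sig k₂ k₃)) := by
  intro ℓ
  have : NeZero L := ⟨ℓ.pos.ne'⟩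
  have hXψ : X ℓ = diagonal (dftAddChar L ℓ) * Sig * (diagonal (dftAddChar L ℓ))ᴴ := by
    rw [hX, coe_dftAddChar]
  have hXpsd : (X ℓ).PosSemidef := hX ℓ ▸ hPSD.mul_mul_conjTranspose_same _
  refine ⟨hXpsd.isHermitian, hXpsd, ?_, fun k => ?_, fun k₁ k₂ k₃ => ?_⟩
  · rw [hXψ, rank_diagonal_addChar_conj, hrank]
  · rw [hXψ, diagonal_addChar_conj_apply_diag]
  · rw [hXψ, diagonal_addChar_conj_apply_mul_star_apply _ _ (by abel),
      diagonal_addChar_conj_apply_mul_star_apply _ _ (by abel)]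
end
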